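/- For every n ≥ 1, every binary sequence in B_{3;2}(n) avoids each of the three blocks (011100), (001110), (001111100) as a contiguous sub-block; that is, B_{3;2}(n) ⊆ S_{F(2)}(n). (Lemma 9) -/

import Mathlib

/-- `x` is a ternary sequence: every entry lies in `{-1, 0, 1} ⊆ ℤ`. -/
def IsTernary {n : ℕ} (x : Fin n → ℤ) : Prop :=
  ∀ i, x i = -1 ∨ x i = 0 ∨ x i = 1

/-- A ternary sequence `x` of length `n` (0-indexed positions) satisfies the TGP(t)
constraint. -/
def SatisfiesTGPt (t : ℕ) {n : ℕ} (x : Fin n → ℤ) : Prop :=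
  ∀ k l m : Fin n, x k ≠ 0 → x k = x l → x l = x m →
    max (max |((k : ℕ) : ℤ) - ((l : ℕ) : ℤ)| |((l : ℕ) : ℤ) - ((m : ℕ) : ℤ)|)
        |((m : ℕ) : ℤ) - ((k : ℕ) : ℤ)| ≤ (t : ℤ) →
    ∀ i : Fin n, ((i : ℕ) : ℤ) = ((k : ℕ) : ℤ) + ((l : ℕ) : ℤ) - ((m : ℕ) : ℤ) →
      x i ≠ 0

/-- `B3t t n = ξ(T_{3;t}(n))`: binary sequences of length `n` obtainable as
componentwise absolute values of TGP(t)-constrained ternary sequences. -/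
def B3t (t n : ℕ) : Set (Fin n → Fin 2) :=
  {y | ∃ x : Fin n → ℤ, IsTernary x ∧ SatisfiesTGPt t x ∧
    y = fun i => if x i = 0 then 0 else 1}

/-- `y` contains the pattern `p` as a contiguous sub-block. -/
def HasBlock {n m : ℕ} (y : Fin n → Fin 2) (p : Fin m → Fin 2) : Prop :=
  ∃ i : ℕ, ∃ h : i + m ≤ n,
    ∀ j : Fin m, y ⟨i + j.val, by have := j.isLt; omega⟩ = p j

/-- `SF2 n`: binary sequences of length `n` avoiding all three forbidden blocks
`(011100)`, `(001110)`, `(001111100)` of `F(2)`. -/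
def SF2 (n : ℕ) : Set (Fin n → Fin 2) :=
  {y | ¬ HasBlock y ![0, 1, 1, 1, 0, 0] ∧ ¬ HasBlock y ![0, 0, 1, 1, 1, 0] ∧
       ¬ HasBlock y ![0, 0, 1, 1, 1, 1, 1, 0, 0]}

/-!
Write `x̄` for `x` extended by zero. TGP(2) applied with `k = l = a`, `m = b` says: if
`x̄ a = x̄ b ≠ 0` and `|a - b| ≤ 2`, then the mirror image `2a - b` is in the support
whenever it lies in range. Among three consecutive support entries two carry the same sign,
so in a window `0 0 * * *` the reflections rule out every coincidence except `x̄ 3 = x̄ 4`,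
and dually in a window `* * * 0 0` only `x̄ 0 = x̄ 1` survives. Each forbidden block then
yields a coincidence whose reflection lands on one of its zeros.
-/

section TGP

variable {t n : ℕ} {x : Fin n → ℤ}

def zeroExtend (x : Fin n → ℤ) (k : ℕ) : ℤ :=
  if h : k < n then x ⟨k, h⟩ else 0

lemma zeroExtend_of_lt {k : ℕ} (h : k < n) : zeroExtend x k = x ⟨k, h⟩ := dif_pos h

lemma lt_of_zeroExtend_ne_zero {k : ℕ} (h : zeroExtend x k ≠ 0) : k < n := by
  by_contra hk
  exact h (dif_neg hk)

lemma IsTernary.zeroExtend (hT : IsTernary x) (k : ℕ) :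
    zeroExtend x k = -1 ∨ zeroExtend x k = 0 ∨ zeroExtend x k = 1 := by
  by_cases hk : k < n
  · rw [zeroExtend_of_lt hk]; exact hT _
  · exact Or.inr (Or.inl (dif_neg hk))

lemma SatisfiesTGPt.zeroExtend_reflect_ne_zero (hS : SatisfiesTGPt t x) {a b c : ℕ}
    (ha : zeroExtend x a ≠ 0) (hab : zeroExtend x a = zeroExtend x b)
    (hba : b ≤ a + t) (hab' : a ≤ b + t) (hc : c < n) (hcab : c + b = 2 * a) :
    zeroExtend x c ≠ 0 := by
  have ha' := lt_of_zeroExtend_ne_zero ha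
  have hb' := lt_of_zeroExtend_ne_zero (hab ▸ ha)
  rw [zeroExtend_of_lt ha'] at ha
  rw [zeroExtend_of_lt ha', zeroExtend_of_lt hb'] at hab
  rw [zeroExtend_of_lt hc]
  refine hS ⟨a, ha'⟩ ⟨a, ha'⟩ ⟨b, hb'⟩ ha rfl hab ?_ ⟨c, hc⟩ (by push_cast; omega)
  simp only [sub_self, abs_zero, max_le_iff, abs_le]
  omega

lemma eq_or_eq_or_eq_of_ne_zero {u v w : ℤ} (hu : u = -1 ∨ u = 0 ∨ u = 1)
    (hv : v = -1 ∨ v = 0 ∨ v = 1) (hw : w = -1 ∨ w = 0 ∨ w = 1)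
    (hu0 : u ≠ 0) (hv0 : v ≠ 0) (hw0 : w ≠ 0) : u = v ∨ v = w ∨ u = w := by
  omega

lemma HasBlock.exists_zeroExtend {m : ℕ} {p : Fin m → Fin 2}
    (h : HasBlock (fun i => if x i = 0 then (0 : Fin 2) else 1) p) :
    ∃ i, i + m ≤ n ∧ ∀ j : Fin m, (zeroExtend x (i + j) = 0 ↔ p j = 0) := by
  obtain ⟨i, hi, hp⟩ := h
  refine ⟨i, hi, fun j => ?_⟩
  rw [← hp j, zeroExtend_of_lt (by omega)]
  simp only
  split_ifs with hx <;> simp [hx]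

lemma SatisfiesTGPt.eq_of_pattern_00111 (hS : SatisfiesTGPt 2 x) (hT : IsTernary x) {p : ℕ}
    (h0 : zeroExtend x p = 0) (h1 : zeroExtend x (p + 1) = 0) (h2 : zeroExtend x (p + 2) ≠ 0)
    (h3 : zeroExtend x (p + 3) ≠ 0) (h4 : zeroExtend x (p + 4) ≠ 0) :
    zeroExtend x (p + 3) = zeroExtend x (p + 4) := by
  have hp := lt_of_zeroExtend_ne_zero h2
  rcases eq_or_eq_or_eq_of_ne_zero (hT.zeroExtend _) (hT.zeroExtend _) (hT.zeroExtend _)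
    h2 h3 h4 with h23 | h34 | h24
  · exact absurd h1 (hS.zeroExtend_reflect_ne_zero h2 h23
      (by omega) (by omega) (by omega) (by omega))
  · exact h34
  · exact absurd h0 (hS.zeroExtend_reflect_ne_zero h2 h24
      (by omega) (by omega) (by omega) (by omega))

lemma SatisfiesTGPt.eq_of_pattern_11100 (hS : SatisfiesTGPt 2 x) (hT : IsTernary x)
    {p : ℕ} (hp : p + 4 < n)
    (h0 : zeroExtend x p ≠ 0) (h1 : zeroExtend x (p + 1) ≠ 0) (h2 : zeroExtend x (p + 2) ≠ 0)
    (h3 : zeroExtend x (p + 3) = 0) (h4 : zeroExtend x (p + 4) = 0) :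
    zeroExtend x p = zeroExtend x (p + 1) := by
  rcases eq_or_eq_or_eq_of_ne_zero (hT.zeroExtend _) (hT.zeroExtend _) (hT.zeroExtend _)
    h0 h1 h2 with h01 | h12 | h02
  · exact h01
  · exact absurd h3 (hS.zeroExtend_reflect_ne_zero h2 h12.symm
      (by omega) (by omega) (by omega) (by omega))
  · exact absurd h4 (hS.zeroExtend_reflect_ne_zero h2 h02.symm
      (by omega) (by omega) (by omega) (by omega))

lemma not_hasBlock_011100 (hT : IsTernary x) (hS : SatisfiesTGPt 2 x) :
    ¬ HasBlock (fun i => if x i = 0 then (0 : Fin 2) else 1) ![0, 1, 1, 1, 0, 0] := by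
  intro h
  obtain ⟨i, hi, hp⟩ := h.exists_zeroExtend
  simp only [Fin.forall_fin_succ, Fin.val_succ, Fin.val_zero, Fin.val_eq_zero, Fin.isValue,
    Matrix.cons_val_zero, Matrix.cons_val_succ, iff_true, iff_false, one_ne_zero,
    IsEmpty.forall_iff, and_true, Nat.reduceAdd, zero_add, add_zero] at hp
  obtain ⟨h0, h1, h2, h3, h4, h5⟩ := hp
  exact hS.zeroExtend_reflect_ne_zero h1 (hS.eq_of_pattern_11100 hT (by omega) h1 h2 h3 h4 h5)
    (by omega) (by omega) (by omega) (by omega) h0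

lemma not_hasBlock_001110 (hT : IsTernary x) (hS : SatisfiesTGPt 2 x) :
    ¬ HasBlock (fun i => if x i = 0 then (0 : Fin 2) else 1) ![0, 0, 1, 1, 1, 0] := by
  intro h
  obtain ⟨i, hi, hp⟩ := h.exists_zeroExtend
  simp only [Fin.forall_fin_succ, Fin.val_succ, Fin.val_zero, Fin.val_eq_zero, Fin.isValue,
    Matrix.cons_val_zero, Matrix.cons_val_succ, iff_true, iff_false, one_ne_zero,
    IsEmpty.forall_iff, and_true, Nat.reduceAdd, zero_add, add_zero] at hp
  obtain ⟨h0, h1, h2, h3, h4, h5⟩ := hp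
  exact hS.zeroExtend_reflect_ne_zero h4 (hS.eq_of_pattern_00111 hT h0 h1 h2 h3 h4).symm
    (by omega) (by omega) (by omega) (by omega) h5

lemma not_hasBlock_001111100 (hT : IsTernary x) (hS : SatisfiesTGPt 2 x) :
    ¬ HasBlock (fun i => if x i = 0 then (0 : Fin 2) else 1) ![0, 0, 1, 1, 1, 1, 1, 0, 0] := by
  intro h
  obtain ⟨i, hi, hp⟩ := h.exists_zeroExtend
  simp only [Fin.forall_fin_succ, Fin.val_succ, Fin.val_zero, Fin.val_eq_zero, Fin.isValue,
    Matrix.cons_val_zero, Matrix.cons_val_succ, iff_true, iff_false, one_ne_zero,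
    IsEmpty.forall_iff, and_true, Nat.reduceAdd, zero_add, add_zero] at hp
  obtain ⟨h0, h1, h2, h3, h4, h5, h6, h7, h8⟩ := hp
  have h34 := hS.eq_of_pattern_00111 hT h0 h1 h2 h3 h4
  have h45 := hS.eq_of_pattern_11100 hT (by omega) h4 h5 h6 h7 h8
  exact hS.zeroExtend_reflect_ne_zero h3 (h34.trans h45)
    (by omega) (by omega) (by omega) (by omega) h1

end TGP

theorem B32_subset_SF2_general (n : ℕ) : B3t 2 n ⊆ SF2 n := by
  rintro _ ⟨x, hT, hS, rfl⟩
  exact ⟨not_hasBlock_011100 hT hS, not_hasBlock_001110 hT hS, not_hasBlock_001111100 hT hS⟩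

/-- **Lemma 9.** For every `n ≥ 1`, every binary sequence in `B_{3;2}(n)` avoids
each of the three forbidden blocks of `F(2)`: `B_{3;2}(n) ⊆ S_{F(2)}(n)`. -/
theorem B32_subset_SF2 (n : ℕ) (hn : 1 ≤ n) : B3t 2 n ⊆ SF2 n :=
  B32_subset_SF2_general n
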